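/- arXiv:1603.03002 — 3 statements merged into one kernel-verified Lean document; each statement's English description precedes it below -/
import Mathlib

section
/- Let R₁, R₂ ⊆ F be subsets of the free group F of rank m ≥ 2 such that 1 ∉ R₁, |uv| = |u| + |v| for all u ∈ R₁ and v ∈ R₂ (all products are reduced), and the multiplication map (u,v) ↦ uv is injective on R₁ × R₂. Let R = {uv : u ∈ R₁, v ∈ R₂}. Then for all real t ∈ (−1,1): g_R(t) = g_{R₁}(t) · g*_{R₂}(t). -/
open Filter Set

noncomputable section

/-- The free group of rank `m`. -/
abbrev FG (m : ℕ) := FreeGroup (Fin m)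

/-- The length of the reduced word of `g`. -/
def glen {m : ℕ} (g : FG m) : ℕ := (FreeGroup.toWord g).length

/-- The cardinality of the sphere of radius `k` in the free group of rank `m`,
as a real number: `1` if `k = 0` and `2m(2m-1)^(k-1)` otherwise. -/
def sphereCard (m k : ℕ) : ℝ :=
  if k = 0 then 1 else 2 * (m : ℝ) * (2 * (m : ℝ) - 1) ^ (k - 1)

/-- `n_k(R)`: the number of elements of length `k` in `R`. -/
def nk {m : ℕ} (R : Set (FG m)) (k : ℕ) : ℕ := {g ∈ R | glen g = k}.ncard

/-- `f_k(R) = n_k(R) / |S_k|`: the frequency of elements of `R` among words of length `k`. -/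
def fk {m : ℕ} (R : Set (FG m)) (k : ℕ) : ℝ := (nk R k : ℝ) / sphereCard m k

/-- The frequency generating function `g_R(t) = ∑ f_k(R) t^k`. -/
def genFun {m : ℕ} (R : Set (FG m)) (t : ℝ) : ℝ := ∑' k : ℕ, fk R k * t ^ k

/-- The adjusted generating function `g*_R(t) = ∑ n_k(R) (t/(2m-1))^k`. -/
def genFunStar {m : ℕ} (R : Set (FG m)) (t : ℝ) : ℝ :=
  ∑' k : ℕ, (nk R k : ℝ) * (t / (2 * (m : ℝ) - 1)) ^ k

/-- `R` is thick: `lim_{t→1⁻} (1-t)·g_R(t)` exists and is positive. -/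
def IsThick {m : ℕ} (R : Set (FG m)) : Prop :=
  ∃ c : ℝ, 0 < c ∧
    Tendsto (fun t => (1 - t) * genFun R t) (nhdsWithin 1 (Set.Iio 1)) (nhds c)

/-- `R` is exponentially negligible (exponentially λ-measurable): there is `δ ∈ (0,1)`
with `f_k(R) < δ^k` for all sufficiently large `k`. -/
def ExpNegligible {m : ℕ} (R : Set (FG m)) : Prop :=
  ∃ δ : ℝ, 0 < δ ∧ δ < 1 ∧ ∀ᶠ k : ℕ in atTop, fk R k < δ ^ k

/-- `R ⊆ F` is a regular set if the language of reduced words of its elements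
(over the alphabet `Σ = X ∪ X⁻¹`, encoded as `Fin m × Bool`) is a regular language. -/
def IsRegularSet {m : ℕ} (R : Set (FG m)) : Prop :=
  Language.IsRegular {w : List (Fin m × Bool) | ∃ g ∈ R, FreeGroup.toWord g = w}

/-- The cone `C(w) = { wf : |wf| = |w| + |f| }`. -/
def cone {m : ℕ} (w : FG m) : Set (FG m) :=
  {g | ∃ f, g = w * f ∧ glen g = glen w + glen f}

/-- The right cone `C[w] = { fw : |fw| = |f| + |w| }`. -/
def coneR {m : ℕ} (w : FG m) : Set (FG m) :=
  {g | ∃ f, g = f * w ∧ glen g = glen f + glen w}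

/-- The double-based cone `C(u,v) = { ufv : |ufv| = |u| + |f| + |v| }`. -/
def dcone {m : ℕ} (u v : FG m) : Set (FG m) :=
  {g | ∃ f, g = u * f * v ∧ glen g = glen u + glen f + glen v}

/-- The prefix closure of `R`. -/
def prefixClosure {m : ℕ} (R : Set (FG m)) : Set (FG m) :=
  {p | ∃ g ∈ R, ∃ s, g = p * s ∧ glen g = glen p + glen s}

/-- A finite deterministic partial automaton over the alphabet
`Σ = X ∪ X⁻¹` (encoded as `Fin m × Bool`), with one initial and one final state. -/
structure PAut (m : ℕ) where
  n : ℕ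
  step : Fin n → Fin m × Bool → Option (Fin n)
  start : Fin n
  accept : Fin n

namespace PAut

variable {m : ℕ}

/-- Run the automaton from state `s` on the word `w`. -/
def evalFrom (A : PAut m) : Fin A.n → List (Fin m × Bool) → Option (Fin A.n)
  | s, [] => some s
  | s, a :: w =>
    match A.step s a with
    | none => none
    | some s' => A.evalFrom s' w

/-- The set of words accepted by `A`. -/
def words (A : PAut m) : Set (List (Fin m × Bool)) :=
  {w | A.evalFrom A.start w = some A.accept}

/-- The language of `A`, identified with a subset of the free group. -/
def lang (A : PAut m) : Set (FG m) :=
  (fun w => FreeGroup.mk w) '' A.words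

/-- Conditions (c)–(f) of a special automaton:
(c) every state is reachable from the initial state;
(d) the final state is reachable from every state;
(e) all transitions entering a given state carry the same label (the type of the state);
(f) if a state has type `x`, no transition labeled `x⁻¹` leaves it. -/
def CoreSpecial (A : PAut m) : Prop :=
  (∀ s, ∃ w, A.evalFrom A.start w = some s) ∧
  (∀ s, ∃ w, A.evalFrom s w = some A.accept) ∧
  (∀ s₁ a₁ s₂ a₂ s, A.step s₁ a₁ = some s → A.step s₂ a₂ = some s → a₁ = a₂) ∧
  (∀ s' a s, A.step s' a = some s → A.step s (a.1, !a.2) = none)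

/-- A special automaton over the free group: conditions (a)–(f), with distinct
initial and final states and no transition entering the initial state. -/
def IsSpecial (A : PAut m) : Prop :=
  A.start ≠ A.accept ∧ (∀ s a, A.step s a ≠ some A.start) ∧ A.CoreSpecial

/-- A special monoid automaton: conditions (c)–(f), with the initial state equal to
the final state. -/
def IsSpecialMonoidAut (A : PAut m) : Prop :=
  A.start = A.accept ∧ A.CoreSpecial

/-- `A` is `Σ`-complete: every state `s` has a type `x` and for every label
`y ≠ x⁻¹` the transition `δ(s,y)` is defined. -/
def SigmaComplete (A : PAut m) : Prop :=
  ∀ s, ∃ a, (∃ s', A.step s' a = some s) ∧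
    ∀ b, b ≠ (a.1, !a.2) → (A.step s b).isSome

end PAut

/-- A special monoid: the language of a special monoid automaton. -/
def IsSpecialMonoid {m : ℕ} (M : Set (FG m)) : Prop :=
  ∃ A : PAut m, A.IsSpecialMonoidAut ∧ M = A.lang

/-- A thick monoid: the language of a `Σ`-complete special monoid automaton. -/
def IsThickMonoid {m : ℕ} (M : Set (FG m)) : Prop :=
  ∃ A : PAut m, A.IsSpecialMonoidAut ∧ A.SigmaComplete ∧ M = A.lang

/-!
Every `g = uv` with `u ∈ R₁`, `v ∈ R₂` factors uniquely and `|g| = |u| + |v|`, so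
`n_k(R) = ∑_{i+j=k} n_i(R₁) n_j(R₂)`. As `|S_{i+j}| = |S_i| (2m-1)^j` for `i ≥ 1` and
`n_0(R₁) = 0`, dividing by `|S_k|` exhibits the coefficients of `g_R` as the Cauchy product of
those of `g_{R₁}` and `g*_{R₂}`. Both series converge absolutely on `(-1, 1)` because
`n_k(R) ≤ |S_k|`, the number of reduced words of length `k`.
-/

namespace FreeGroup

variable (α : Type*) [Fintype α]

open Classical in
def reducedWords (k : ℕ) : Finset (List (α × Bool)) :=
  {l ∈ (Finset.univ : Finset (List.Vector (α × Bool) k)).map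
    ⟨List.Vector.toList, List.Vector.toList_injective⟩ | IsReduced l}

variable {α}

theorem mem_reducedWords {k : ℕ} {l : List (α × Bool)} :
    l ∈ reducedWords α k ↔ l.length = k ∧ IsReduced l := by
  simp only [reducedWords, Finset.mem_filter, Finset.mem_map, Finset.mem_univ, true_and,
    Function.Embedding.coeFn_mk]
  exact and_congr_left' ⟨fun ⟨v, hv⟩ => hv ▸ v.toList_length, fun h => ⟨⟨l, h⟩, rfl⟩⟩

theorem card_reducedWords_le_pow (k : ℕ) :
    (reducedWords α k).card ≤ (2 * Fintype.card α) ^ k := by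
  classical
  calc (reducedWords α k).card
      ≤ ((Finset.univ : Finset (List.Vector (α × Bool) k)).map
          ⟨List.Vector.toList, List.Vector.toList_injective⟩).card := Finset.card_filter_le _ _
    _ = (2 * Fintype.card α) ^ k := by simp [mul_comm]

theorem card_reducedWords_succ_succ_le (k : ℕ) :
    (reducedWords α (k + 2)).card ≤ (2 * Fintype.card α - 1) * (reducedWords α (k + 1)).card := by
  classical
  refine Finset.card_le_mul_card_image_of_maps_to (f := List.tail) (fun l hl => ?_) _ ?_
  · rw [mem_reducedWords] at hl ⊢
    exact ⟨by simp [hl.1], hl.2.infix (List.tail_suffix l).isInfix⟩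
  rintro (_ | ⟨c, w⟩) hw
  · simp [mem_reducedWords] at hw
  calc ((reducedWords α (k + 2)).filter (·.tail = c :: w)).card
      ≤ ((Finset.univ.erase (c.1, !c.2)).image (· :: c :: w)).card := by
        refine Finset.card_le_card fun l hl => ?_
        obtain ⟨hl, htail⟩ := Finset.mem_filter.1 hl
        obtain _ | ⟨a, l⟩ := l
        · cases htail
        obtain rfl : l = c :: w := htail
        have hac := (isReduced_cons_cons.1 (mem_reducedWords.1 hl).2).1
        refine Finset.mem_image.2 ⟨a, Finset.mem_erase.2 ⟨fun h => ?_, Finset.mem_univ _⟩, rfl⟩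
        simp [h] at hac
    _ ≤ (Finset.univ.erase (c.1, !c.2)).card := Finset.card_image_le
    _ = 2 * Fintype.card α - 1 := by simp [Finset.card_erase_of_mem, mul_comm]

theorem card_reducedWords_succ_le (k : ℕ) :
    (reducedWords α (k + 1)).card ≤ 2 * Fintype.card α * (2 * Fintype.card α - 1) ^ k := by
  induction k with
  | zero => simpa using card_reducedWords_le_pow (α := α) 1
  | succ k ih =>
    calc (reducedWords α (k + 2)).card
        ≤ (2 * Fintype.card α - 1) * (reducedWords α (k + 1)).card :=
          card_reducedWords_succ_succ_le k
      _ ≤ (2 * Fintype.card α - 1) * (2 * Fintype.card α * (2 * Fintype.card α - 1) ^ k) :=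
          Nat.mul_le_mul_left _ ih
      _ = 2 * Fintype.card α * (2 * Fintype.card α - 1) ^ (k + 1) := by ring

end FreeGroup

section GrowthSeries

open Finset FreeGroup

variable {m : ℕ}

theorem finite_setOf_mem_glen_eq (R : Set (FG m)) (k : ℕ) : {g ∈ R | glen g = k}.Finite :=
  (reducedWords (Fin m) k).finite_toSet.of_injOn
    (fun _ hg => mem_reducedWords.2 ⟨hg.2, isReduced_toWord⟩) toWord_injective.injOn

theorem nk_le_card_reducedWords (R : Set (FG m)) (k : ℕ) :
    nk R k ≤ (reducedWords (Fin m) k).card :=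
  (Set.ncard_le_ncard_of_injOn toWord
    (fun _ hg => mem_reducedWords.2 ⟨hg.2, isReduced_toWord⟩) toWord_injective.injOn
    (reducedWords (Fin m) k).finite_toSet).trans_eq (Set.ncard_coe_finset _)

theorem nk_zero_eq_zero {R : Set (FG m)} (h1 : (1 : FG m) ∉ R) : nk R 0 = 0 := by
  rw [nk, Set.ncard_eq_zero (finite_setOf_mem_glen_eq R 0)]
  refine Set.eq_empty_of_forall_notMem fun g ⟨hg, hg0⟩ => h1 ?_
  rwa [← toWord_eq_nil_iff.1 (List.length_eq_zero_iff.1 hg0)]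

theorem sphereCard_succ (m k : ℕ) : sphereCard m (k + 1) = 2 * m * (2 * m - 1) ^ k := by
  simp [sphereCard]

theorem sphereCard_add (m : ℕ) {i : ℕ} (hi : i ≠ 0) (j : ℕ) :
    sphereCard m (i + j) = sphereCard m i * (2 * m - 1) ^ j := by
  obtain ⟨i, rfl⟩ := Nat.exists_eq_succ_of_ne_zero hi
  rw [Nat.succ_add, sphereCard_succ, sphereCard_succ, pow_add]
  ring

theorem one_le_two_mul_sub_one (hm : 0 < m) : (1 : ℝ) ≤ 2 * m - 1 := by
  have : (1 : ℝ) ≤ m := by exact_mod_cast hm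
  linarith

theorem sphereCard_pos (hm : 0 < m) (k : ℕ) : 0 < sphereCard m k := by
  cases k with
  | zero => simp [sphereCard]
  | succ k =>
    rw [sphereCard_succ]
    have := one_le_two_mul_sub_one hm
    exact mul_pos (by positivity) (pow_pos (by linarith) _)

theorem sphereCard_le (hm : 0 < m) (k : ℕ) : sphereCard m k ≤ 2 * m * (2 * m - 1) ^ k := by
  have := one_le_two_mul_sub_one hm
  cases k with
  | zero => rw [sphereCard, if_pos rfl, pow_zero, mul_one]; linarith
  | succ k =>
    rw [sphereCard_succ]
    exact mul_le_mul_of_nonneg_left (pow_le_pow_right₀ this k.le_succ) (by positivity)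

theorem nk_le_sphereCard (hm : 0 < m) (R : Set (FG m)) (k : ℕ) :
    (nk R k : ℝ) ≤ sphereCard m k := by
  cases k with
  | zero =>
    have := (nk_le_card_reducedWords R 0).trans (card_reducedWords_le_pow 0)
    simp only [pow_zero] at this
    simpa [sphereCard] using (Nat.cast_le (α := ℝ)).2 this
  | succ k =>
    have := (nk_le_card_reducedWords R (k + 1)).trans (card_reducedWords_succ_le k)
    rw [Fintype.card_fin] at this
    rw [sphereCard_succ]
    calc (nk R (k + 1) : ℝ) ≤ ((2 * m * (2 * m - 1) ^ k : ℕ) : ℝ) := by exact_mod_cast this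
      _ = 2 * m * (2 * m - 1) ^ k := by push_cast [Nat.cast_sub (by omega : 1 ≤ 2 * m)]; rfl

theorem fk_nonneg (hm : 0 < m) (R : Set (FG m)) (k : ℕ) : 0 ≤ fk R k :=
  div_nonneg (Nat.cast_nonneg _) (sphereCard_pos hm k).le

theorem fk_le_one (hm : 0 < m) (R : Set (FG m)) (k : ℕ) : fk R k ≤ 1 :=
  (div_le_one (sphereCard_pos hm k)).2 (nk_le_sphereCard hm R k)

theorem summable_norm_fk_mul_pow (hm : 0 < m) (R : Set (FG m)) {t : ℝ} (ht : |t| < 1) :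
    Summable fun k => ‖fk R k * t ^ k‖ := by
  refine (summable_geometric_of_lt_one (abs_nonneg t) ht).of_nonneg_of_le
    (fun _ => norm_nonneg _) fun k => ?_
  rw [norm_mul, norm_pow, Real.norm_eq_abs, Real.norm_eq_abs, abs_of_nonneg (fk_nonneg hm R k)]
  exact mul_le_of_le_one_left (by positivity) (fk_le_one hm R k)

theorem summable_norm_nk_mul_pow (hm : 0 < m) (R : Set (FG m)) {t : ℝ} (ht : |t| < 1) :
    Summable fun k => ‖(nk R k : ℝ) * (t / (2 * m - 1)) ^ k‖ := by
  have hq : 0 < 2 * (m : ℝ) - 1 := zero_lt_one.trans_le (one_le_two_mul_sub_one hm)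
  refine ((summable_geometric_of_lt_one (abs_nonneg t) ht).mul_left (2 * (m : ℝ))).of_nonneg_of_le
    (fun _ => norm_nonneg _) fun k => ?_
  rw [norm_mul, norm_pow, norm_div, Real.norm_eq_abs, Real.norm_eq_abs, Real.norm_eq_abs,
    Nat.abs_cast, abs_of_pos hq]
  calc (nk R k : ℝ) * (|t| / (2 * m - 1)) ^ k
      ≤ 2 * m * (2 * m - 1) ^ k * (|t| / (2 * m - 1)) ^ k := by
        gcongr
        exact (nk_le_sphereCard hm R k).trans (sphereCard_le hm k)
    _ = 2 * m * |t| ^ k := by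
        rw [div_pow]
        field_simp

theorem nk_mul_eq_sum_antidiagonal {R₁ R₂ : Set (FG m)}
    (hlen : ∀ u ∈ R₁, ∀ v ∈ R₂, glen (u * v) = glen u + glen v)
    (hinj : ∀ u ∈ R₁, ∀ v ∈ R₂, ∀ u' ∈ R₁, ∀ v' ∈ R₂, u * v = u' * v' → u = u' ∧ v = v')
    (k : ℕ) :
    nk {g : FG m | ∃ u ∈ R₁, ∃ v ∈ R₂, g = u * v} k
      = ∑ ij ∈ antidiagonal k, nk R₁ ij.1 * nk R₂ ij.2 := by
  let slice (R : Set (FG m)) (i : ℕ) := (finite_setOf_mem_glen_eq R i).toFinset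
  have hnk (R : Set (FG m)) (i : ℕ) : nk R i = #(slice R i) := Set.ncard_eq_toFinset_card _ _
  simp_rw [hnk, ← card_product, ← card_sigma]
  symm
  refine card_nbij (fun p => p.2.1 * p.2.2) ?_ ?_ ?_
  · rintro ⟨⟨i, j⟩, u, v⟩ h
    simp only [coe_sigma, coe_product, Set.Finite.coe_toFinset, Set.mem_sigma_iff,
      SetLike.mem_coe, HasAntidiagonal.mem_antidiagonal, Set.mem_prod, Set.mem_ofPred_eq,
      slice] at h ⊢
    obtain ⟨hk, ⟨hu, rfl⟩, hv, rfl⟩ := h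
    exact ⟨⟨u, hu, v, hv, rfl⟩, by rw [hlen u hu v hv, hk]⟩
  · rintro ⟨⟨i, j⟩, u, v⟩ h ⟨⟨i', j'⟩, u', v'⟩ h' heq
    simp only [coe_sigma, coe_product, Set.Finite.coe_toFinset, Set.mem_sigma_iff,
      SetLike.mem_coe, HasAntidiagonal.mem_antidiagonal, Set.mem_prod, Set.mem_ofPred_eq,
      Sigma.mk.injEq, heq_eq_eq, Prod.mk.injEq, slice] at h h' heq ⊢
    obtain ⟨-, ⟨hu, rfl⟩, hv, rfl⟩ := h
    obtain ⟨-, ⟨hu', rfl⟩, hv', rfl⟩ := h'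
    obtain ⟨rfl, rfl⟩ := hinj u hu v hv u' hu' v' hv' heq
    exact ⟨⟨rfl, rfl⟩, rfl, rfl⟩
  · rintro g hg
    simp only [Set.mem_ofPred_eq, Set.Finite.coe_toFinset, coe_sigma, coe_product, Set.mem_image,
      Set.mem_sigma_iff, SetLike.mem_coe, HasAntidiagonal.mem_antidiagonal, Set.mem_prod,
      Sigma.exists, Prod.exists, existsAndEq, and_true, slice] at hg ⊢
    obtain ⟨⟨u, hu, v, hv, rfl⟩, rfl⟩ := hg
    exact ⟨u, v, ⟨(hlen u hu v hv).symm, hu, hv⟩, rfl⟩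

theorem nk_mul_div_sphereCard_add (hm : 0 < m) {R₁ : Set (FG m)} (h0 : nk R₁ 0 = 0)
    (R₂ : Set (FG m)) (i j : ℕ) (t : ℝ) :
    (nk R₁ i * nk R₂ j : ℝ) / sphereCard m (i + j) * t ^ (i + j)
      = fk R₁ i * t ^ i * (nk R₂ j * (t / (2 * m - 1)) ^ j) := by
  rcases eq_or_ne i 0 with rfl | hi
  · simp [fk, h0]
  have hq : 2 * (m : ℝ) - 1 ≠ 0 := (zero_lt_one.trans_le (one_le_two_mul_sub_one hm)).ne'
  have hs := (sphereCard_pos hm i).ne'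
  rw [sphereCard_add m hi, fk, pow_add, div_pow]
  field_simp

theorem fk_mul_pow_eq_sum_antidiagonal (hm : 0 < m) {R₁ R₂ : Set (FG m)}
    (h1 : (1 : FG m) ∉ R₁)
    (hlen : ∀ u ∈ R₁, ∀ v ∈ R₂, glen (u * v) = glen u + glen v)
    (hinj : ∀ u ∈ R₁, ∀ v ∈ R₂, ∀ u' ∈ R₁, ∀ v' ∈ R₂, u * v = u' * v' → u = u' ∧ v = v')
    (k : ℕ) (t : ℝ) :
    fk {g : FG m | ∃ u ∈ R₁, ∃ v ∈ R₂, g = u * v} k * t ^ k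
      = ∑ ij ∈ antidiagonal k,
          fk R₁ ij.1 * t ^ ij.1 * (nk R₂ ij.2 * (t / (2 * m - 1)) ^ ij.2) := by
  rw [fk, nk_mul_eq_sum_antidiagonal hlen hinj, Nat.cast_sum, sum_div, sum_mul]
  refine sum_congr rfl fun ij hij => ?_
  rw [← mem_antidiagonal.1 hij, Nat.cast_mul]
  exact nk_mul_div_sphereCard_add hm (nk_zero_eq_zero h1) R₂ ij.1 ij.2 t

end GrowthSeries

/-- multiplicativity of the generating function for an unambiguous
reduced product of two sets. -/
theorem stmt3 {m : ℕ} (hm : 2 ≤ m) (R₁ R₂ : Set (FG m))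
    (h1 : (1 : FG m) ∉ R₁)
    (hlen : ∀ u ∈ R₁, ∀ v ∈ R₂, glen (u * v) = glen u + glen v)
    (hinj : ∀ u ∈ R₁, ∀ v ∈ R₂, ∀ u' ∈ R₁, ∀ v' ∈ R₂,
      u * v = u' * v' → u = u' ∧ v = v') :
    ∀ t ∈ Set.Ioo (-1 : ℝ) 1,
      genFun {g : FG m | ∃ u ∈ R₁, ∃ v ∈ R₂, g = u * v} t
        = genFun R₁ t * genFunStar R₂ t := by
  intro t ht
  have hm₀ : 0 < m := by omega
  have ht₁ : |t| < 1 := abs_lt.2 ht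
  calc genFun {g : FG m | ∃ u ∈ R₁, ∃ v ∈ R₂, g = u * v} t
      = ∑' k, ∑ ij ∈ Finset.HasAntidiagonal.antidiagonal k,
          fk R₁ ij.1 * t ^ ij.1 * (nk R₂ ij.2 * (t / (2 * m - 1)) ^ ij.2) :=
        tsum_congr fun k => fk_mul_pow_eq_sum_antidiagonal hm₀ h1 hlen hinj k t
    _ = genFun R₁ t * genFunStar R₂ t :=
        (tsum_mul_tsum_eq_tsum_sum_antidiagonal_of_summable_norm
          (summable_norm_fk_mul_pow hm₀ R₁ ht₁) (summable_norm_nk_mul_pow hm₀ R₂ ht₁)).symm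
end
end

section
/- Let L ⊆ F be a regular subset of the free group F of rank m ≥ 2. Then there exist finitely many pairwise disjoint subsets L₀, L₁, …, L_k of F with L = L₀ ∪ L₁ ∪ … ∪ L_k such that each L_i is either the language L(A) of some special automaton A over F, or a special monoid. -/
open Filter Set

noncomputable section

/-!
Let `M` be a DFA recognising the reduced words of `L`. Refine its states by the last letter
read, and delete the transitions that would cancel that letter: the runs of the refined automaton
from `(start, none)` are exactly the runs of `M` on reduced words. For every reachable refined state
`z` over an accepting state of `M`, the runs from the start to `z`, trimmed to the states they
visit, form an automaton satisfying (c)–(f): each state is entered only by the letter it remembers,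
and reading the inverse of that letter is forbidden. Nothing enters the start state, so this is a
special automaton when `z` is not the start state and a special monoid (namely `{1}`) otherwise.
By determinism the languages for distinct `z` are disjoint, and together they make up `L`.
-/

lemma FreeGroup.image_mk_setOf_isReduced {α : Type*} [DecidableEq α] (P : List (α × Bool) → Prop) :
    FreeGroup.mk '' {w | FreeGroup.IsReduced w ∧ P w} = {g | P g.toWord} := by
  ext g
  constructor
  · rintro ⟨w, ⟨hw, hP⟩, rfl⟩
    rwa [Set.mem_ofPred_eq, FreeGroup.toWord_mk, hw.reduce_eq]
  · exact fun hg => ⟨g.toWord, ⟨FreeGroup.isReduced_toWord, hg⟩, FreeGroup.mk_toWord⟩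

open Function in
lemma exists_fin_pairwise_disjoint_iUnion_eq {β ι : Type*} [Finite ι] (f : ι → Set β)
    (hf : Pairwise (Disjoint on f)) (P : Set β → Prop) (hP : ∀ i, (f i).Nonempty → P (f i)) :
    ∃ (k : ℕ) (g : Fin k → Set β), (∀ i j, i ≠ j → Disjoint (g i) (g j)) ∧
      ⋃ i, f i = ⋃ i, g i ∧ ∀ i, P (g i) := by
  let e := Finite.equivFin {i // (f i).Nonempty}
  refine ⟨_, fun j => f (e.symm j), fun i j hij => hf ?_, ?_, fun j => hP _ (e.symm j).2⟩
  · exact Subtype.coe_injective.ne (e.symm.injective.ne hij)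
  · ext x
    simp only [Set.mem_iUnion]
    exact ⟨fun ⟨i, hx⟩ => ⟨e ⟨i, x, hx⟩, by simpa using hx⟩, fun ⟨j, hx⟩ => ⟨_, hx⟩⟩

namespace PartialStep

variable {α S : Type*} (δ : S → α → Option S)

def Reaches (s t : S) : Prop := ∃ w : List α, w.foldlM δ s = some t

variable {δ} in
lemma Reaches.refl (s : S) : Reaches δ s s := ⟨[], rfl⟩

variable {δ} in
lemma Reaches.trans {s t u : S} : Reaches δ s t → Reaches δ t u → Reaches δ s u := by
  rintro ⟨v, hv⟩ ⟨w, hw⟩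
  exact ⟨v ++ w, by simp [List.foldlM_append, hv, hw]⟩

lemma reaches_of_eq_some {s t : S} {a : α} (h : δ s a = some t) : Reaches δ s t :=
  ⟨[a], by simp [h]⟩

/-- Condition (e) of a special automaton. -/
def IsTyped : Prop := ∀ s₁ a₁ s₂ a₂ s, δ s₁ a₁ = some s → δ s₂ a₂ = some s → a₁ = a₂

/-- Condition (f) of a special automaton. -/
def NoBacktrack {β : Type*} (δ : S → β × Bool → Option S) : Prop :=
  ∀ s' a s, δ s' a = some s → δ s (a.1, !a.2) = none

abbrev Trim (s₀ z : S) : Type _ := {s : S // Reaches δ s₀ s ∧ Reaches δ s z}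

open Classical in
def trimStep (s₀ z : S) (s : Trim δ s₀ z) (a : α) : Option (Trim δ s₀ z) :=
  (δ s.1 a).bind fun t => if h : Reaches δ s₀ t ∧ Reaches δ t z then some ⟨t, h⟩ else none

variable {δ} {s₀ z : S}

lemma foldlM_trimStep_eq_some_iff (w : List α) (s t : Trim δ s₀ z) :
    w.foldlM (trimStep δ s₀ z) s = some t ↔ w.foldlM δ s.1 = some t.1 := by
  induction w generalizing s with
  | nil => simp [Subtype.ext_iff]
  | cons a w ih =>
    simp only [List.foldlM_cons, trimStep]
    cases hs : δ s.1 a with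
    | none => simp
    | some u =>
      by_cases hu : Reaches δ s₀ u ∧ Reaches δ u z
      · simpa [hu] using ih ⟨u, hu⟩
      · simp only [Option.bind_some, hu, dite_false, Option.bind_eq_bind, Option.bind_none,
          reduceCtorEq, false_iff]
        intro hw
        exact hu ⟨s.2.1.trans (reaches_of_eq_some δ hs), Reaches.trans ⟨w, hw⟩ t.2.2⟩

lemma reaches_trimStep_iff {s t : Trim δ s₀ z} :
    Reaches (trimStep δ s₀ z) s t ↔ Reaches δ s.1 t.1 := by
  simp only [Reaches, foldlM_trimStep_eq_some_iff]

lemma trimStep_eq_some_iff {s t : Trim δ s₀ z} {a : α} :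
    trimStep δ s₀ z s a = some t ↔ δ s.1 a = some t.1 := by
  simpa using foldlM_trimStep_eq_some_iff [a] s t

lemma IsTyped.trimStep (h : IsTyped δ) : IsTyped (trimStep δ s₀ z) :=
  fun _ _ _ _ _ h₁ h₂ => h _ _ _ _ _ (trimStep_eq_some_iff.1 h₁) (trimStep_eq_some_iff.1 h₂)

lemma NoBacktrack.trimStep {β : Type*} {δ : S → β × Bool → Option S} (h : NoBacktrack δ) :
    NoBacktrack (trimStep δ s₀ z) := by
  intro s' a s hs
  simp [PartialStep.trimStep, h _ _ _ (trimStep_eq_some_iff.1 hs)]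

end PartialStep

open PartialStep

namespace PAut

variable {m : ℕ}

lemma evalFrom_eq_foldlM (A : PAut m) (s : Fin A.n) (w : List (Fin m × Bool)) :
    A.evalFrom s w = w.foldlM A.step s := by
  induction w generalizing s with
  | nil => rfl
  | cons a w ih =>
    simp only [evalFrom, List.foldlM_cons]
    cases A.step s a <;> simp [ih]

lemma coreSpecial_iff (A : PAut m) : A.CoreSpecial ↔
    (∀ s, Reaches A.step A.start s) ∧ (∀ s, Reaches A.step s A.accept) ∧
      IsTyped A.step ∧ NoBacktrack A.step := by
  simp only [CoreSpecial, Reaches, evalFrom_eq_foldlM, IsTyped, NoBacktrack]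

section Equiv

variable (A : PAut m) {S : Type*} {δ : S → Fin m × Bool → Option S} {e : S ≃ Fin A.n}

lemma foldlM_step_eq_map (he : ∀ s a, A.step (e s) a = (δ s a).map e)
    (w : List (Fin m × Bool)) (s : S) : w.foldlM A.step (e s) = (w.foldlM δ s).map e := by
  induction w generalizing s with
  | nil => rfl
  | cons a w ih =>
    rw [List.foldlM_cons, he]
    cases h : δ s a <;> simp [h, ih]

lemma words_eq_of_equiv (he : ∀ s a, A.step (e s) a = (δ s a).map e) {s₀ z : S}
    (hs₀ : A.start = e s₀) (hz : A.accept = e z) :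
    A.words = {w | w.foldlM δ s₀ = some z} := by
  ext w
  simp only [words, Set.mem_ofPred_eq, evalFrom_eq_foldlM, hs₀, hz, foldlM_step_eq_map A he,
    Option.map_eq_some_iff, EmbeddingLike.apply_eq_iff_eq, exists_eq_right]

lemma coreSpecial_of_equiv (he : ∀ s a, A.step (e s) a = (δ s a).map e) {s₀ z : S}
    (hs₀ : A.start = e s₀) (hz : A.accept = e z)
    (hc : ∀ s, Reaches δ s₀ s) (hd : ∀ s, Reaches δ s z)
    (ht : IsTyped δ) (hb : NoBacktrack δ) : A.CoreSpecial := by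
  have hr : ∀ s t, Reaches δ s t → Reaches A.step (e s) (e t) := fun s t ⟨w, hw⟩ =>
    ⟨w, by simp [foldlM_step_eq_map A he, hw]⟩
  have hs : ∀ {s a j}, A.step (e s) a = some j → δ s a = some (e.symm j) := by
    intro s a j h
    rw [he, Option.map_eq_some_iff] at h
    obtain ⟨t, ht, rfl⟩ := h
    simpa using ht
  rw [coreSpecial_iff, hs₀, hz]
  refine ⟨fun i => ?_, fun i => ?_, fun i₁ a₁ i₂ a₂ j h₁ h₂ => ?_, fun i' a i h => ?_⟩
  · simpa using hr _ _ (hc (e.symm i))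
  · simpa using hr _ _ (hd (e.symm i))
  · rw [← e.apply_symm_apply i₁] at h₁
    rw [← e.apply_symm_apply i₂] at h₂
    exact ht _ _ _ _ _ (hs h₁) (hs h₂)
  · rw [← e.apply_symm_apply i'] at h
    rw [← e.apply_symm_apply i, he, hb _ _ _ (hs h), Option.map_none]

lemma step_ne_start_of_equiv (he : ∀ s a, A.step (e s) a = (δ s a).map e) {s₀ : S}
    (hs₀ : A.start = e s₀) (h : ∀ s a, δ s a ≠ some s₀) (i : Fin A.n) (a : Fin m × Bool) :
    A.step i a ≠ some A.start := by
  rw [← e.apply_symm_apply i, he, hs₀, Ne, Option.map_eq_some_iff]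
  simpa using h _ a

end Equiv

section Trim

variable {S : Type*} [Finite S]

def ofFinite (δ : S → Fin m × Bool → Option S) (s₀ z : S) : PAut m where
  n := Nat.card S
  step i a := (δ ((Finite.equivFin S).symm i) a).map (Finite.equivFin S)
  start := Finite.equivFin S s₀
  accept := Finite.equivFin S z

lemma ofFinite_step (δ : S → Fin m × Bool → Option S) (s₀ z s : S) (a : Fin m × Bool) :
    (ofFinite δ s₀ z).step (Finite.equivFin S s) a = (δ s a).map (Finite.equivFin S) := by
  simp only [ofFinite, Equiv.symm_apply_apply]

def trim (δ : S → Fin m × Bool → Option S) (s₀ z : S) (h : Reaches δ s₀ z) : PAut m :=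
  ofFinite (trimStep δ s₀ z) ⟨s₀, .refl s₀, h⟩ ⟨z, h, .refl z⟩

variable {δ : S → Fin m × Bool → Option S} {s₀ z : S} (h : Reaches δ s₀ z)

lemma words_trim : (trim δ s₀ z h).words = {w | w.foldlM δ s₀ = some z} := by
  rw [trim, words_eq_of_equiv _ (ofFinite_step _ _ _) rfl rfl]
  simp [foldlM_trimStep_eq_some_iff]

lemma coreSpecial_trim (ht : IsTyped δ) (hb : NoBacktrack δ) : (trim δ s₀ z h).CoreSpecial :=
  coreSpecial_of_equiv _ (ofFinite_step _ _ _) rfl rfl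
    (fun s => reaches_trimStep_iff.2 s.2.1) (fun s => reaches_trimStep_iff.2 s.2.2)
    ht.trimStep hb.trimStep

lemma isSpecial_trim (hne : s₀ ≠ z) (hs₀ : ∀ s a, δ s a ≠ some s₀) (ht : IsTyped δ)
    (hb : NoBacktrack δ) : (trim δ s₀ z h).IsSpecial := by
  refine ⟨fun h' => hne ?_, fun i a h' => ?_, coreSpecial_trim h ht hb⟩
  · simpa using (Finite.equivFin _).injective h'
  · refine step_ne_start_of_equiv _ (ofFinite_step _ _ _) rfl (fun s a hs => ?_) i a h'
    exact hs₀ s.1 a (trimStep_eq_some_iff.1 hs)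

lemma isSpecialMonoidAut_trim (h : Reaches δ s₀ s₀) (ht : IsTyped δ) (hb : NoBacktrack δ) :
    (trim δ s₀ s₀ h).IsSpecialMonoidAut :=
  ⟨rfl, coreSpecial_trim h ht hb⟩

end Trim

end PAut

namespace DFA

variable {α σ : Type*} (M : DFA (α × Bool) σ)

open Classical in
/-- The refinement of `M` that remembers the last letter read and cannot cancel it. -/
def reducedStep (p : σ × Option (α × Bool)) (a : α × Bool) : Option (σ × Option (α × Bool)) :=
  if ∀ b ∈ p.2, b.1 = a.1 → b.2 = a.2 then some (M.step p.1 a, some a) else none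

lemma foldlM_reducedStep_eq_some_iff (w : List (α × Bool)) (q : σ) (t : Option (α × Bool))
    (p : σ × Option (α × Bool)) :
    w.foldlM M.reducedStep (q, t) = some p ↔
      FreeGroup.IsReduced (t.toList ++ w) ∧ p = (M.evalFrom q w, (t.toList ++ w).getLast?) := by
  induction w generalizing q t with
  | nil => cases t <;> simp [eq_comm, FreeGroup.IsReduced]
  | cons a w ih =>
    have hred : FreeGroup.IsReduced (t.toList ++ a :: w) ↔
        (∀ b ∈ t, b.1 = a.1 → b.2 = a.2) ∧ FreeGroup.IsReduced (a :: w) := by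
      cases t <;> simp [FreeGroup.IsReduced, List.isChain_cons_cons]
    have hlast : (t.toList ++ a :: w).getLast? = (a :: w).getLast? := by
      cases t <;> simp
    rw [List.foldlM_cons, reducedStep, hred, hlast, evalFrom_cons]
    by_cases hg : ∀ b ∈ t, b.1 = a.1 → b.2 = a.2
    · rw [if_pos hg, Option.bind_eq_bind, Option.bind_some, ih, and_iff_right hg]
      rfl
    · rw [if_neg hg, Option.bind_eq_bind, Option.bind_none]
      exact iff_of_false (by simp) fun h => hg h.1.1

lemma reducedStep_eq_some {p p' : σ × Option (α × Bool)} {a : α × Bool}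
    (h : M.reducedStep p a = some p') : p' = (M.step p.1 a, some a) := by
  unfold reducedStep at h
  split_ifs at h
  exact (Option.some_inj.1 h).symm

lemma isTyped_reducedStep : IsTyped M.reducedStep := fun _ _ _ _ _ h₁ h₂ => by
  simpa using congrArg Prod.snd ((M.reducedStep_eq_some h₁).symm.trans (M.reducedStep_eq_some h₂))

lemma noBacktrack_reducedStep : NoBacktrack M.reducedStep := fun _ _ _ h => by
  simp [reducedStep, M.reducedStep_eq_some h]

lemma reducedStep_ne_some_none (p : σ × Option (α × Bool)) (a : α × Bool) (q : σ) :
    M.reducedStep p a ≠ some (q, none) := fun h => by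
  simpa using M.reducedStep_eq_some h

section Fiber

variable [DecidableEq α]

def fiber (z : σ × Option (α × Bool)) : Set (FreeGroup α) :=
  (fun g => (M.eval g.toWord, g.toWord.getLast?)) ⁻¹' {z}

open Function in
lemma pairwise_disjoint_fiber : Pairwise (Disjoint on M.fiber) := fun _ _ h =>
  (Set.disjoint_singleton.2 h).preimage _

lemma reaches_of_mem_fiber {z : σ × Option (α × Bool)} {g : FreeGroup α} (hg : g ∈ M.fiber z) :
    Reaches M.reducedStep (M.start, none) z :=
  ⟨g.toWord, (M.foldlM_reducedStep_eq_some_iff _ _ _ _).2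
    ⟨FreeGroup.isReduced_toWord, (Set.mem_singleton_iff.1 hg).symm⟩⟩

lemma eq_iUnion_fiber_of_accepts {L : Set (FreeGroup α)}
    (hM : M.accepts = {w | ∃ g ∈ L, FreeGroup.toWord g = w}) :
    L = ⋃ z : {z : σ × Option (α × Bool) // z.1 ∈ M.accept}, M.fiber z := by
  ext g
  have hg : g ∈ L ↔ g.toWord ∈ M.accepts := by
    rw [hM]
    exact ⟨fun h => ⟨g, h, rfl⟩, fun ⟨g', h', e⟩ => FreeGroup.toWord_injective e ▸ h'⟩
  rw [hg, mem_accepts]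
  simp [fiber]

end Fiber

section Special

variable {m : ℕ} [Finite σ] (M : DFA (Fin m × Bool) σ) {z : σ × Option (Fin m × Bool)}

lemma lang_trim_reducedStep (h : Reaches M.reducedStep (M.start, none) z) :
    (PAut.trim M.reducedStep (M.start, none) z h).lang = M.fiber z := by
  rw [PAut.lang, PAut.words_trim]
  simp only [foldlM_reducedStep_eq_some_iff, Option.toList_none, List.nil_append, eq_comm (a := z)]
  exact FreeGroup.image_mk_setOf_isReduced _

lemma fiber_isSpecial_or_isSpecialMonoid (hz : (M.fiber z).Nonempty) :
    (∃ A : PAut m, A.IsSpecial ∧ M.fiber z = A.lang) ∨ IsSpecialMonoid (M.fiber z) := by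
  obtain ⟨g, hg⟩ := hz
  have h := M.reaches_of_mem_fiber hg
  by_cases hs : (M.start, none) = z
  · subst hs
    exact .inr ⟨_, PAut.isSpecialMonoidAut_trim h M.isTyped_reducedStep
      M.noBacktrack_reducedStep, (M.lang_trim_reducedStep h).symm⟩
  · exact .inl ⟨_, PAut.isSpecial_trim h hs (fun p a => M.reducedStep_ne_some_none p a _)
      M.isTyped_reducedStep M.noBacktrack_reducedStep, (M.lang_trim_reducedStep h).symm⟩

end Special

end DFA

theorem stmt4_general {m : ℕ} (L : Set (FG m)) (hL : IsRegularSet L) :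
    ∃ (k : ℕ) (Ls : Fin k → Set (FG m)),
      (∀ i j, i ≠ j → Disjoint (Ls i) (Ls j)) ∧
      L = ⋃ i, Ls i ∧
      ∀ i, (∃ A : PAut m, A.IsSpecial ∧ Ls i = A.lang) ∨ IsSpecialMonoid (Ls i) := by
  obtain ⟨σ, _, M, hM⟩ := hL
  obtain ⟨k, Ls, hd, hU, hP⟩ := exists_fin_pairwise_disjoint_iUnion_eq
    (fun z : {z : σ × Option (Fin m × Bool) // z.1 ∈ M.accept} => M.fiber z.1)
    (M.pairwise_disjoint_fiber.comp_of_injective Subtype.coe_injective)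
    (fun S => (∃ A : PAut m, A.IsSpecial ∧ S = A.lang) ∨ IsSpecialMonoid S)
    (fun _ => M.fiber_isSpecial_or_isSpecialMonoid)
  exact ⟨k, Ls, hd, (M.eq_iUnion_fiber_of_accepts hM).trans hU, hP⟩

/-- every regular set decomposes as a finite disjoint union of languages
of special automata and special monoids. -/
theorem stmt4 {m : ℕ} (hm : 2 ≤ m) (L : Set (FG m)) (hL : IsRegularSet L) :
    ∃ (k : ℕ) (Ls : Fin k → Set (FG m)),
      (∀ i j, i ≠ j → Disjoint (Ls i) (Ls j)) ∧
      L = ⋃ i, Ls i ∧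
      ∀ i, (∃ A : PAut m, A.IsSpecial ∧ Ls i = A.lang) ∨ IsSpecialMonoid (Ls i) :=
  stmt4_general L hL
end
end

section
/- Let M ⊆ F be a special monoid in the free group F of rank m ≥ 2. Then M is a submonoid of F, |uv| = |u| + |v| for all u, v ∈ M, and M is a free monoid: there exists a subset W ⊆ M ∖ {1} such that every element of M can be written in exactly one way as a product w₁w₂⋯w_n with n ≥ 0 and w_i ∈ W (and all such products are reduced: |w₁⋯w_n| = |w₁| + ⋯ + |w_n|). -/
open Filter Set

noncomputable section

/-!
Because the initial state is also the final one and the automaton is deterministic, the accepted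
words form a submonoid of the free monoid `Σ*` with left cancellation: if `u` and `uv` are
accepted, so is `v`. Such a submonoid is freely generated by the prefix code of its first
returns, the nonempty words with no proper nonempty prefix in it. Condition (f) makes every
accepted word reduced, so on `M` the product of `F` is the concatenation of reduced words.
-/

open FreeGroup

section FirstReturns

variable {α : Type*} {L : Set (List α)}

def firstReturns (L : Set (List α)) : Set (List α) :=
  {w | w ≠ [] ∧ w ∈ L ∧ ∀ u, u ≠ [] → u ∈ L → u <+: w → u = w}

theorem firstReturns_subset : firstReturns L ⊆ L := fun _ hw => hw.2.1

theorem eq_of_flatten_eq_of_prefix_code {B : Set (List α)} (hnil : [] ∉ B)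
    (hcode : ∀ b ∈ B, ∀ b' ∈ B, b <+: b' → b = b') :
    ∀ {ws ws' : List (List α)}, (∀ b ∈ ws, b ∈ B) → (∀ b ∈ ws', b ∈ B) →
      ws.flatten = ws'.flatten → ws = ws'
  | [], [], _, _, _ => rfl
  | [], b :: _, _, h', he => absurd (h' b (by simp)) (by simp_all)
  | b :: _, [], h, _, he => absurd (h b (by simp)) (by simp_all)
  | b :: ws, b' :: ws', h, h', he => by
    rw [List.flatten_cons, List.flatten_cons] at he
    have hbB := h b (by simp)
    have hbB' := h' b' (by simp)
    have hbb' : b = b' := by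
      rcases List.prefix_or_prefix_of_prefix (List.prefix_append b ws.flatten)
          (he ▸ List.prefix_append b' ws'.flatten) with hp | hp
      · exact hcode b hbB b' hbB' hp
      · exact (hcode b' hbB' b hbB hp).symm
    subst hbb'
    rw [eq_of_flatten_eq_of_prefix_code hnil hcode (fun c hc => h c (by simp [hc]))
      (fun c hc => h' c (by simp [hc])) (List.append_cancel_left he)]

theorem exists_firstReturns_prefix {w : List α} (hw : w ∈ L) (hne : w ≠ []) :
    ∃ p ∈ firstReturns L, p <+: w := by
  by_cases hmin : w ∈ firstReturns L
  · exact ⟨w, hmin, List.prefix_refl w⟩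
  · obtain ⟨u, hu, huL, huw, huw'⟩ : ∃ u, u ≠ [] ∧ u ∈ L ∧ u <+: w ∧ u ≠ w := by
      simpa [firstReturns, hne, hw] using hmin
    obtain ⟨p, hp, hpu⟩ := exists_firstReturns_prefix huL hu
    exact ⟨p, hp, hpu.trans huw⟩
termination_by w.length
decreasing_by exact lt_of_le_of_ne huw.length_le fun h => huw' (huw.eq_of_length h)

theorem exists_flatten_eq_of_mem (hcancel : ∀ {u v}, u ∈ L → u ++ v ∈ L → v ∈ L)
    {w : List α} (hw : w ∈ L) : ∃ ws : List (List α), (∀ b ∈ ws, b ∈ firstReturns L) ∧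
      ws.flatten = w := by
  by_cases hne : w = []
  · exact ⟨[], by simp, hne.symm⟩
  · obtain ⟨p, hp, r, hpr⟩ := exists_firstReturns_prefix hw hne
    obtain ⟨ws, hws, hwsr⟩ := exists_flatten_eq_of_mem hcancel (hcancel hp.2.1 (hpr ▸ hw))
    exact ⟨p :: ws, by simpa using ⟨hp, hws⟩, by rw [List.flatten_cons, hwsr, hpr]⟩
termination_by w.length
decreasing_by
  have := List.length_pos_iff.mpr hp.1
  rw [← hpr, List.length_append]
  omega

theorem flatten_mem (hnil : [] ∈ L) (happend : ∀ {u v}, u ∈ L → v ∈ L → u ++ v ∈ L)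
    {ws : List (List α)} (hws : ∀ b ∈ ws, b ∈ L) : ws.flatten ∈ L := by
  induction ws with
  | nil => exact hnil
  | cons b ws ih =>
    simp only [List.mem_cons, forall_eq_or_imp] at hws
    exact happend hws.1 (ih hws.2)

end FirstReturns

namespace FreeGroup

variable {α : Type*}

theorem prod_map_mk (ws : List (List (α × Bool))) : (ws.map mk).prod = mk ws.flatten := by
  induction ws with
  | nil => rfl
  | cons w ws ih => rw [List.map_cons, List.prod_cons, ih, mul_mk, List.flatten_cons]

variable [DecidableEq α]

theorem toWord_mk_of_isReduced {w : List (α × Bool)} (h : IsReduced w) : (mk w).toWord = w :=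
  toWord_mk.trans h.reduce_eq

theorem map_mk_map_toWord (l : List (FreeGroup α)) : (l.map toWord).map mk = l := by
  simp [Function.comp_def, mk_toWord]

theorem prod_eq_mk_flatten_toWord (l : List (FreeGroup α)) :
    l.prod = mk (l.map toWord).flatten := by
  rw [← prod_map_mk, map_mk_map_toWord]

section ReducedLanguage

variable {L : Set (List (α × Bool))} (hred : ∀ w ∈ L, IsReduced w)
include hred

theorem toWord_mem_of_mem_image_mk {g : FreeGroup α} (hg : g ∈ mk '' L) : g.toWord ∈ L := by
  obtain ⟨w, hw, rfl⟩ := hg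
  rwa [toWord_mk_of_isReduced (hred w hw)]

theorem one_notMem_image_mk_firstReturns : (1 : FreeGroup α) ∉ mk '' firstReturns L := by
  rintro ⟨w, hw, h1⟩
  apply hw.1
  rw [← toWord_mk_of_isReduced (hred w hw.2.1), h1, toWord_one]

variable (hnil : [] ∈ L) (happend : ∀ {u v}, u ∈ L → v ∈ L → u ++ v ∈ L)
include hnil happend

theorem flatten_map_toWord_mem {l : List (FreeGroup α)} (hl : ∀ g ∈ l, g ∈ mk '' L) :
    (l.map toWord).flatten ∈ L :=
  flatten_mem hnil happend (by simpa using fun g hg => toWord_mem_of_mem_image_mk hred (hl g hg))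

theorem toWord_prod_of_forall_mem {l : List (FreeGroup α)} (hl : ∀ g ∈ l, g ∈ mk '' L) :
    l.prod.toWord = (l.map toWord).flatten := by
  rw [prod_eq_mk_flatten_toWord,
    toWord_mk_of_isReduced (hred _ (flatten_map_toWord_mem hred hnil happend hl))]

theorem prod_mem_image_mk {l : List (FreeGroup α)} (hl : ∀ g ∈ l, g ∈ mk '' L) :
    l.prod ∈ mk '' L :=
  ⟨_, flatten_map_toWord_mem hred hnil happend hl, (prod_eq_mk_flatten_toWord l).symm⟩

theorem mul_mem_image_mk {u v : FreeGroup α} (hu : u ∈ mk '' L) (hv : v ∈ mk '' L) :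
    u * v ∈ mk '' L := by
  simpa using prod_mem_image_mk hred hnil happend
    (List.forall_mem_cons.mpr ⟨hu, List.forall_mem_singleton.mpr hv⟩)

theorem length_toWord_prod {l : List (FreeGroup α)} (hl : ∀ g ∈ l, g ∈ mk '' L) :
    l.prod.toWord.length = (l.map fun g => g.toWord.length).sum := by
  rw [toWord_prod_of_forall_mem hred hnil happend hl, List.length_flatten, List.map_map]
  rfl

theorem length_toWord_mul {u v : FreeGroup α} (hu : u ∈ mk '' L) (hv : v ∈ mk '' L) :
    (u * v).toWord.length = u.toWord.length + v.toWord.length := by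
  simpa using length_toWord_prod hred hnil happend
    (List.forall_mem_cons.mpr ⟨hu, List.forall_mem_singleton.mpr hv⟩)

theorem existsUnique_prod_eq (hcancel : ∀ {u v}, u ∈ L → u ++ v ∈ L → v ∈ L)
    {g : FreeGroup α} (hg : g ∈ mk '' L) :
    ∃! l : List (FreeGroup α), (∀ w ∈ l, w ∈ mk '' firstReturns L) ∧ l.prod = g := by
  obtain ⟨ws, hws, hflat⟩ :=
    exists_flatten_eq_of_mem hcancel (toWord_mem_of_mem_image_mk hred hg)
  refine ⟨ws.map mk, ⟨by simpa using fun b hb => ⟨b, hws b hb, rfl⟩, ?_⟩, ?_⟩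
  · rw [prod_map_mk, hflat, mk_toWord]
  · rintro l ⟨hl, rfl⟩
    have hlw : ∀ b ∈ l.map toWord, b ∈ firstReturns L := by
      simpa using fun g hg => toWord_mem_of_mem_image_mk
        (fun w hw => hred w hw.2.1) (hl g hg)
    have hcode : l.map toWord = ws :=
      eq_of_flatten_eq_of_prefix_code (fun h => h.1 rfl)
        (fun b hb b' hb' hp => hb'.2.2 b hb.1 hb.2.1 hp) hlw hws
        (by rw [hflat, ← toWord_prod_of_forall_mem hred hnil happend
              fun g hg => image_mono firstReturns_subset (hl g hg)])
    rw [← hcode, map_mk_map_toWord]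

end ReducedLanguage

end FreeGroup

namespace PAut

variable {m : ℕ} (A : PAut m)

theorem evalFrom_cons_eq_some_iff {s t : Fin A.n} {a : Fin m × Bool}
    {w : List (Fin m × Bool)} : A.evalFrom s (a :: w) = some t ↔
      ∃ s', A.step s a = some s' ∧ A.evalFrom s' w = some t := by
  simp only [evalFrom]
  cases A.step s a <;> simp

theorem evalFrom_append (s : Fin A.n) (u v : List (Fin m × Bool)) :
    A.evalFrom s (u ++ v) = (A.evalFrom s u).bind fun t => A.evalFrom t v := by
  induction u generalizing s with
  | nil => rfl
  | cons a u ih =>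
    simp only [List.cons_append, evalFrom]
    cases A.step s a with
    | none => rfl
    | some s' => exact ih s'

theorem isReduced_of_evalFrom_eq_some
    (hf : ∀ s' a s, A.step s' a = some s → A.step s (a.1, !a.2) = none)
    {w : List (Fin m × Bool)} {s t : Fin A.n} (h : A.evalFrom s w = some t) : IsReduced w := by
  induction w generalizing s with
  | nil => exact IsReduced.nil
  | cons a w ih =>
    obtain ⟨s₁, hs₁, hw⟩ := A.evalFrom_cons_eq_some_iff.mp h
    cases w with
    | nil => exact IsReduced.singleton
    | cons b w =>
      refine isReduced_cons_cons.mpr ⟨fun h1 => ?_, ih hw⟩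
      obtain ⟨s₂, hs₂, -⟩ := A.evalFrom_cons_eq_some_iff.mp hw
      by_contra h2
      have hb : b = (a.1, !a.2) := Prod.ext h1.symm (Bool.eq_not.mpr (Ne.symm h2))
      simp [hb, hf s a s₁ hs₁] at hs₂

variable {A}

theorem mem_words {w : List (Fin m × Bool)} :
    w ∈ A.words ↔ A.evalFrom A.start w = some A.accept :=
  Iff.rfl

variable (hstart : A.start = A.accept)
include hstart

theorem nil_mem_words : [] ∈ A.words := congrArg some hstart

theorem append_mem_words {u v : List (Fin m × Bool)} (hu : u ∈ A.words) (hv : v ∈ A.words) :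
    u ++ v ∈ A.words := by
  rw [mem_words] at hu hv ⊢
  rw [evalFrom_append, hu, Option.bind_some, ← hstart]
  rwa [← hstart] at hv

theorem mem_words_of_append_mem_words {u v : List (Fin m × Bool)} (hu : u ∈ A.words)
    (huv : u ++ v ∈ A.words) : v ∈ A.words := by
  rw [mem_words] at hu huv ⊢
  rw [evalFrom_append, hu, Option.bind_some, ← hstart] at huv
  rwa [← hstart]

end PAut

theorem stmt6_general {m : ℕ} (M : Set (FG m)) (hM : IsSpecialMonoid M) :
    (1 : FG m) ∈ M ∧
    (∀ u ∈ M, ∀ v ∈ M, u * v ∈ M) ∧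
    (∀ u ∈ M, ∀ v ∈ M, glen (u * v) = glen u + glen v) ∧
    ∃ W : Set (FG m), W ⊆ M ∧ (1 : FG m) ∉ W ∧
      (∀ g ∈ M, ∃! l : List (FG m), (∀ w ∈ l, w ∈ W) ∧ l.prod = g) ∧
      (∀ l : List (FG m), (∀ w ∈ l, w ∈ W) → glen l.prod = (l.map glen).sum) := by
  obtain ⟨A, ⟨hstart, -, -, -, hf⟩, rfl⟩ := hM
  have hred : ∀ w ∈ A.words, IsReduced w := fun w hw => A.isReduced_of_evalFrom_eq_some hf hw
  have hnil := PAut.nil_mem_words hstart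
  have happend : ∀ {u v}, u ∈ A.words → v ∈ A.words → u ++ v ∈ A.words :=
    PAut.append_mem_words hstart
  refine ⟨⟨[], hnil, rfl⟩, fun u hu v hv => mul_mem_image_mk hred hnil happend hu hv,
    fun u hu v hv => length_toWord_mul hred hnil happend hu hv,
    mk '' firstReturns A.words, image_mono firstReturns_subset,
    one_notMem_image_mk_firstReturns hred,
    fun g hg => existsUnique_prod_eq hred hnil happend
      (PAut.mem_words_of_append_mem_words hstart) hg,
    fun l hl => length_toWord_prod hred hnil happend
      fun g hg => image_mono firstReturns_subset (hl g hg)⟩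

/-- a special monoid is a submonoid of `F` with additive lengths which
is free: there is a set `W` of generators such that every element factors uniquely
as a (reduced) product of elements of `W`. -/
theorem stmt6 {m : ℕ} (hm : 2 ≤ m) (M : Set (FG m)) (hM : IsSpecialMonoid M) :
    (1 : FG m) ∈ M ∧
    (∀ u ∈ M, ∀ v ∈ M, u * v ∈ M) ∧
    (∀ u ∈ M, ∀ v ∈ M, glen (u * v) = glen u + glen v) ∧
    ∃ W : Set (FG m), W ⊆ M ∧ (1 : FG m) ∉ W ∧
      (∀ g ∈ M, ∃! l : List (FG m), (∀ w ∈ l, w ∈ W) ∧ l.prod = g) ∧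
      (∀ l : List (FG m), (∀ w ∈ l, w ∈ W) → glen l.prod = (l.map glen).sum) :=
  stmt6_general M hM
end
end
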